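/- Let (ι, A, I, z, x) be a GI datum, (ι', A, I, z', x') a Kramers–Wannier dual datum for it, m ≥ 1 an integer, l₀ a fixed even-layer index with 1 ≤ l₀ ≤ m, and Q the open bulk qubit type. For all a, b : Q → ZMod 2, if the operator X_a Z_b commutes with every operator in the open bulk generating set, then there exist ε ∈ {1, −1} and a finite list of operators from the open bulk generating set whose product equals ε · X_a Z_b. -/

import Mathlib

noncomputable section

/-- The `ZMod 2`-valued dot product `u·v = ∑ j, u j * v j`. -/
def dotp {ι : Type} [Fintype ι] (u v : ι → ZMod 2) : ZMod 2 := ∑ j, u j * v j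

/-- The X-type Pauli operator `X_u`: the permutation matrix with
`(X_u)_{s,t} = 1` iff `s = t + u`. -/
def Xop {ι : Type} [Fintype ι] (u : ι → ZMod 2) :
    Matrix (ι → ZMod 2) (ι → ZMod 2) ℂ :=
  Matrix.of fun s t => if s = t + u then 1 else 0

/-- The Z-type Pauli operator `Z_v`: the diagonal matrix with
`(Z_v)_{s,s} = (-1)^(v·s)`. -/
def Zop {ι : Type} [Fintype ι] (v : ι → ZMod 2) :
    Matrix (ι → ZMod 2) (ι → ZMod 2) ℂ :=
  Matrix.of fun s t => if s = t then (-1 : ℂ) ^ (dotp v s).val else 0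

/-- The standard inner product on the `ι`-qubit Hilbert space `(ι → ZMod 2) → ℂ`. -/
def qInner {ι : Type} [Fintype ι] [DecidableEq ι] (ψ φ : (ι → ZMod 2) → ℂ) : ℂ :=
  ∑ s, (starRingEnd ℂ) (ψ s) * φ s

/-- The subspace of vectors fixed by every operator in a given set of matrices. -/
def fixedSpace {ι : Type} [Fintype ι] [DecidableEq ι]
    (Ms : Set (Matrix (ι → ZMod 2) (ι → ZMod 2) ℂ)) :
    Submodule ℂ ((ι → ZMod 2) → ℂ) :=
  ⨅ M ∈ Ms, LinearMap.ker (Matrix.mulVecLin M - LinearMap.id)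
/-- The open bulk qubit type: `m+1` odd layers `o_1, …, o_{m+1}` (copies of `ι`) and
`m` even layers `e_1, …, e_m` (copies of `ι'`), with `e_l` between `o_l` and `o_{l+1}`. -/
abbrev OpenQ (m : ℕ) (ι ι' : Type) : Type := (Fin (m + 1) × ι) ⊕ (Fin m × ι')

/-- `w@o_l` (1-based layer index `l`): equal to `w` on odd layer `o_l`, `0` elsewhere. -/
def atOddO {m : ℕ} {ι ι' : Type} (l : ℕ) (w : ι → ZMod 2) : OpenQ m ι ι' → ZMod 2
  | Sum.inl p => if (p.1 : ℕ) + 1 = l then w p.2 else 0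
  | Sum.inr _ => 0

/-- `w'@e_l` (1-based layer index `l`): equal to `w'` on even layer `e_l`, `0` elsewhere. -/
def atEvenO {m : ℕ} {ι ι' : Type} (l : ℕ) (w' : ι' → ZMod 2) : OpenQ m ι ι' → ZMod 2
  | Sum.inl _ => 0
  | Sum.inr p => if (p.1 : ℕ) + 1 = l then w' p.2 else 0

/-- The open bulk generating set: boundary `X` operators on `o_1` and `o_{m+1}`,
X-suspension and Z-suspension operators, layer-wise Z-type symmetries on odd layers,
X-type symmetries on even layers, and compatible Z-type symmetries on the fixed even
layer `e_{l₀}`. -/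
def openBulkSet (m l₀ : ℕ) (ι ι' A I : Type)
    [Fintype ι] [DecidableEq ι] [Fintype ι'] [DecidableEq ι'] [Fintype A] [Fintype I]
    (z : A → ι → ZMod 2) (x : I → ι → ZMod 2)
    (z' : A → ι' → ZMod 2) (x' : I → ι' → ZMod 2) :
    Set (Matrix (OpenQ m ι ι' → ZMod 2) (OpenQ m ι ι' → ZMod 2) ℂ) :=
  {M | (∃ i : I, M = Xop (atOddO 1 (x i)) ∨ M = Xop (atOddO (m + 1) (x i))) ∨
       (∃ (i : I) (l : ℕ), 1 ≤ l ∧ l ≤ m ∧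
          M = Xop (atOddO l (x i) + atEvenO l (x' i) + atOddO (l + 1) (x i))) ∨
       (∃ (α : A) (l : ℕ), 2 ≤ l ∧ l ≤ m ∧
          M = Zop (atEvenO (l - 1) (z' α) + atOddO l (z α) + atEvenO l (z' α))) ∨
       (∃ (l : ℕ) (v : ι → ZMod 2), 1 ≤ l ∧ l ≤ m + 1 ∧
          (∀ i, dotp v (x i) = 0) ∧ M = Zop (atOddO l v)) ∨
       (∃ (l : ℕ) (u' : ι' → ZMod 2), 1 ≤ l ∧ l ≤ m ∧
          (∀ α, dotp u' (z' α) = 0) ∧ M = Xop (atEvenO l u')) ∨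
       (∃ v' : ι' → ZMod 2, v' ∈ Submodule.span (ZMod 2) (Set.range z') ∧
          (∀ i, dotp v' (x' i) = 0) ∧ M = Zop (atEvenO l₀ v'))}

/-!
Since all generators are pure `X` or pure `Z` Pauli operators, `X_a Z_b` commutes with all of
them iff `a` is orthogonal to the `Z`-generator vectors and `b` to the `X`-generator vectors.
It then suffices to show that `a` lies in the span of the `X`-generator vectors and `b` in that
of the `Z`-generator vectors: the product of the corresponding generators is `X_a Z_b`, with
`ε = 1`. Because `S^⊥⊥ = span S` over `ZMod 2`, the inclusions `Z^⊥ ⊆ span X` and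
`X^⊥ ⊆ span Z` are equivalent, so only the first needs an argument.

Orthogonality to the odd-layer symmetries puts every odd layer of `a` in `span x`, i.e. makes it
the first component `w` of a pair `(w, w')` in the span of the `(x i, x' i)`. Telescoping the
boundary operator on `o_1` with the suspensions on `o_1, …, o_{l-1}` shows that `w@o_l` agrees
with `w'` on `e_1, …, e_{l-1}` modulo `X`-generators, so `a` may be replaced by a vector on the
even layers only. By the duality `(z α)·(x i) = (z' α)·(x' i)` the `Z`-suspensions force all
of its even layers to have the same inner products with the `z' α`; orthogonality to the
generators on `e_{l₀}` splits the common layer into a part orthogonal to the `z' α`, which is an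
even-layer symmetry, and a part in `span x'`, which repeated on all even layers is again a
telescoped product of boundary operators and suspensions.
-/

open Matrix

section Orthogonality

variable {n : Type} [Fintype n]

theorem dotp_eq_dotProduct (u v : n → ZMod 2) : dotp u v = u ⬝ᵥ v := rfl

theorem dotp_add_left (u v w : n → ZMod 2) : dotp (u + v) w = dotp u w + dotp v w :=
  add_dotProduct u v w

theorem dotp_add_right (u v w : n → ZMod 2) : dotp u (v + w) = dotp u v + dotp u w :=
  dotProduct_add u v w

theorem dotp_sum_left {κ : Type*} (s : Finset κ) (u : κ → n → ZMod 2) (v : n → ZMod 2) :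
    dotp (∑ k ∈ s, u k) v = ∑ k ∈ s, dotp (u k) v :=
  sum_dotProduct s u v

theorem dotp_smul_left (c : ZMod 2) (u v : n → ZMod 2) : dotp (c • u) v = c * dotp u v :=
  smul_dotProduct c u v

theorem dotp_comm (u v : n → ZMod 2) : dotp u v = dotp v u := dotProduct_comm u v

def dotpPerp (S : Set (n → ZMod 2)) : Submodule (ZMod 2) (n → ZMod 2) where
  carrier := {v | ∀ u ∈ S, dotp v u = 0}
  add_mem' hv hw u hu := by rw [dotp_add_left, hv u hu, hw u hu, add_zero]
  zero_mem' u _ := zero_dotProduct u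
  smul_mem' c v hv u hu := by rw [dotp_smul_left, hv u hu, mul_zero]

theorem mem_dotpPerp_range {κ : Type*} {y : κ → n → ZMod 2} {v : n → ZMod 2} :
    v ∈ dotpPerp (Set.range y) ↔ ∀ k, dotp v (y k) = 0 := Set.forall_mem_range

theorem dotpPerp_anti {S T : Set (n → ZMod 2)} (h : S ⊆ T) : dotpPerp T ≤ dotpPerp S :=
  fun _ hv u hu => hv u (h hu)

theorem dotpPerp_span (S : Set (n → ZMod 2)) :
    dotpPerp ↑(Submodule.span (ZMod 2) S) = dotpPerp S := by
  refine le_antisymm (dotpPerp_anti Submodule.subset_span) fun v hv => ?_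
  suffices Submodule.span (ZMod 2) S ≤ dotpPerp {v} from
    fun u hu => by rw [dotp_comm]; exact this hu v rfl
  exact Submodule.span_le.mpr fun u hu w hw => by rw [hw, dotp_comm]; exact hv u hu

variable [DecidableEq n]

theorem dotpPerp_dotpPerp_le (S : Set (n → ZMod 2)) :
    dotpPerp ↑(dotpPerp S) ≤ Submodule.span (ZMod 2) S := by
  intro u hu
  by_contra hnot
  obtain ⟨f, hfu, hfS⟩ := Submodule.exists_dual_map_eq_bot_of_notMem hnot inferInstance
  set v := (dotProductEquiv (ZMod 2) n).symm f
  have hf : ∀ t, f t = dotp v t := fun t => by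
    rw [dotp_eq_dotProduct, ← dotProductEquiv_apply_apply, LinearEquiv.apply_symm_apply]
  have hv : v ∈ dotpPerp S := fun t ht => by
    rw [← hf, ← Submodule.mem_bot (R := ZMod 2), ← hfS]
    exact Submodule.mem_map_of_mem (Submodule.subset_span ht)
  exact hfu (by rw [hf, dotp_comm]; exact hu v hv)

theorem dotpPerp_le_span_comm {S T : Set (n → ZMod 2)}
    (h : dotpPerp T ≤ Submodule.span (ZMod 2) S) :
    dotpPerp S ≤ Submodule.span (ZMod 2) T := by
  rw [← dotpPerp_span S]
  exact (dotpPerp_anti h).trans (dotpPerp_dotpPerp_le T)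

theorem dotpPerp_span_inf_dotpPerp_le (S T : Set (n → ZMod 2)) :
    dotpPerp ↑(Submodule.span (ZMod 2) S ⊓ dotpPerp T) ≤
      dotpPerp S ⊔ Submodule.span (ZMod 2) T := by
  calc _ ≤ dotpPerp (dotpPerp ((dotpPerp S ⊔ Submodule.span (ZMod 2) T :
          Submodule (ZMod 2) (n → ZMod 2)) : Set (n → ZMod 2))) := by
        refine dotpPerp_anti fun v hv => ⟨?_, ?_⟩
        · exact dotpPerp_dotpPerp_le S fun u hu => hv u (Submodule.mem_sup_left hu)
        · exact fun u hu => hv u (Submodule.mem_sup_right (Submodule.subset_span hu))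
    _ ≤ _ := (dotpPerp_dotpPerp_le _).trans_eq (Submodule.span_eq _)

end Orthogonality

theorem neg_one_pow_val_add (e f : ZMod 2) :
    (-1 : ℂ) ^ (e + f).val = (-1) ^ e.val * (-1) ^ f.val := by
  rw [ZMod.val_add, ← neg_one_pow_eq_pow_mod_two, pow_add]

theorem neg_one_pow_val_injective : Function.Injective fun e : ZMod 2 => (-1 : ℂ) ^ e.val := by
  intro e f h
  fin_cases e <;> fin_cases f <;> first | rfl | norm_num [ZMod.val] at h

section Pauli
variable {n : Type} [Fintype n]

theorem Xop_zero : Xop (0 : n → ZMod 2) = 1 := by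
  ext s t
  simp [Xop, Matrix.one_apply]

theorem Zop_zero : Zop (0 : n → ZMod 2) = 1 := by
  ext s t
  simp [Zop, Matrix.one_apply, dotp_eq_dotProduct]

variable [DecidableEq n]

theorem XZ_apply (u v s t : n → ZMod 2) :
    (Xop u * Zop v) s t = if s = t + u then (-1 : ℂ) ^ (dotp v t).val else 0 := by
  simp [Matrix.mul_apply, Xop, Zop]

theorem XZ_mul_XZ (a b c d : n → ZMod 2) :
    (Xop a * Zop b) * (Xop c * Zop d)
      = (-1 : ℂ) ^ (dotp b c).val • (Xop (a + c) * Zop (b + d)) := by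
  ext s t
  rw [Matrix.mul_apply, Finset.sum_eq_single (t + c)]
  · simp only [XZ_apply, Matrix.smul_apply, if_true, smul_eq_mul, add_assoc, add_comm c a]
    split_ifs
    · simp only [dotp_eq_dotProduct, dotProduct_add, add_dotProduct, neg_one_pow_val_add]
      ring
    · simp
  · intro r _ hr
    simp [XZ_apply, hr]
  · simp

theorem Xop_add (u w : n → ZMod 2) : Xop (u + w) = Xop u * Xop w := by
  simpa [Zop_zero, dotp_eq_dotProduct] using (XZ_mul_XZ u 0 w 0).symm

theorem Zop_add (v w : n → ZMod 2) : Zop (v + w) = Zop v * Zop w := by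
  simpa [Xop_zero, dotp_eq_dotProduct] using (XZ_mul_XZ 0 v 0 w).symm

theorem XZ_commute_iff (a b c d : n → ZMod 2) :
    (Xop a * Zop b) * (Xop c * Zop d) = (Xop c * Zop d) * (Xop a * Zop b)
      ↔ dotp b c = dotp d a := by
  rw [XZ_mul_XZ, XZ_mul_XZ, add_comm c, add_comm d]
  refine ⟨fun h => neg_one_pow_val_injective ?_, fun h => by rw [h]⟩
  simpa [XZ_apply] using congrFun (congrFun h (a + c)) 0

theorem dotp_eq_zero_of_commute_Xop {a b u : n → ZMod 2}
    (h : (Xop a * Zop b) * Xop u = Xop u * (Xop a * Zop b)) : dotp b u = 0 := by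
  simpa [Zop_zero, dotp_eq_dotProduct] using
    (XZ_commute_iff a b u 0).mp (by simpa [Zop_zero] using h)

theorem dotp_eq_zero_of_commute_Zop {a b v : n → ZMod 2}
    (h : (Xop a * Zop b) * Zop v = Zop v * (Xop a * Zop b)) : dotp a v = 0 := by
  simpa [Xop_zero, dotp_eq_dotProduct, dotProduct_comm] using
    ((XZ_commute_iff a b 0 v).mp (by simpa [Xop_zero] using h)).symm

end Pauli

theorem apply_mem_closure_image_of_mem_span {V M : Type*} [AddCommGroup V] [Module (ZMod 2) V]
    [Monoid M] (f : V → M) (hf₀ : f 0 = 1) (hf : ∀ u w, f (u + w) = f u * f w)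
    {S : Set V} {u : V} (hu : u ∈ Submodule.span (ZMod 2) S) :
    f u ∈ Submonoid.closure (f '' S) := by
  induction hu using Submodule.span_induction with
  | mem w hw => exact Submonoid.subset_closure (Set.mem_image_of_mem f hw)
  | zero => exact hf₀ ▸ Submonoid.one_mem _
  | add w₁ w₂ _ _ h₁ h₂ => exact hf w₁ w₂ ▸ Submonoid.mul_mem _ h₁ h₂
  | smul c w _ h =>
    obtain rfl | rfl : c = 0 ∨ c = 1 := by revert c; decide
    · rw [zero_smul, hf₀]; exact Submonoid.one_mem _
    · rwa [one_smul]

theorem eq_of_forall_succ_eq_on_Icc {β : Type*} {f : ℕ → β} {m : ℕ}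
    (h : ∀ k, 1 ≤ k → k < m → f k = f (k + 1)) :
    ∀ k ∈ Finset.Icc 1 m, ∀ l ∈ Finset.Icc 1 m, f k = f l := by
  suffices hf : ∀ k ∈ Finset.Icc 1 m, f k = f 1 from
    fun k hk l hl => (hf k hk).trans (hf l hl).symm
  intro k hk
  rw [Finset.mem_Icc] at hk
  induction k, hk.1 using Nat.le_induction with
  | base => rfl
  | succ k hk₁ ih => exact (h k hk₁ (by omega)).symm.trans (ih ⟨hk₁, by omega⟩)

section Layers

variable {m : ℕ} {ι ι' : Type}

def atOddOₗ (l : ℕ) : (ι → ZMod 2) →ₗ[ZMod 2] (OpenQ m ι ι' → ZMod 2) where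
  toFun := atOddO l
  map_add' w w' := by ext (_ | _) <;> simp [atOddO, ite_add_ite]
  map_smul' c w := by ext (_ | _) <;> simp [atOddO]

def atEvenOₗ (l : ℕ) : (ι' → ZMod 2) →ₗ[ZMod 2] (OpenQ m ι ι' → ZMod 2) where
  toFun := atEvenO l
  map_add' w w' := by ext (_ | _) <;> simp [atEvenO, ite_add_ite]
  map_smul' c w := by ext (_ | _) <;> simp [atEvenO]

def suspensionₗ (l : ℕ) :
    (ι → ZMod 2) × (ι' → ZMod 2) →ₗ[ZMod 2] (OpenQ m ι ι' → ZMod 2) :=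
  atOddOₗ l ∘ₗ LinearMap.fst _ _ _ + atEvenOₗ l ∘ₗ LinearMap.snd _ _ _
    + atOddOₗ (l + 1) ∘ₗ LinearMap.fst _ _ _

theorem suspensionₗ_apply (l : ℕ) (p : (ι → ZMod 2) × (ι' → ZMod 2)) :
    suspensionₗ (m := m) l p = atOddO l p.1 + atEvenO l p.2 + atOddO (l + 1) p.1 := rfl

theorem atEvenO_add (l : ℕ) (w w' : ι' → ZMod 2) :
    atEvenO (m := m) (ι := ι) l (w + w') = atEvenO l w + atEvenO l w' :=
  map_add (atEvenOₗ l) w w'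

theorem atEvenO_sum {κ : Type*} (l : ℕ) (s : Finset κ) (w : κ → ι' → ZMod 2) :
    atEvenO (m := m) (ι := ι) l (∑ i ∈ s, w i) = ∑ i ∈ s, atEvenO l (w i) :=
  map_sum (atEvenOₗ l) w s

-- The restriction of `a` to the layer `o_l`, resp. `e_l`; it is `0` when there is no such layer.
def oddLayer (a : OpenQ m ι ι' → ZMod 2) (l : ℕ) (j : ι) : ZMod 2 :=
  ∑ k : Fin (m + 1), if (k : ℕ) + 1 = l then a (Sum.inl (k, j)) else 0

def evenLayer (a : OpenQ m ι ι' → ZMod 2) (l : ℕ) (j : ι') : ZMod 2 :=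
  ∑ k : Fin m, if (k : ℕ) + 1 = l then a (Sum.inr (k, j)) else 0

theorem eq_sum_atOddO_add_sum_atEvenO (a : OpenQ m ι ι' → ZMod 2) :
    a = ∑ l ∈ Finset.Icc 1 (m + 1), atOddO l (oddLayer a l)
      + ∑ l ∈ Finset.Icc 1 m, atEvenO l (evenLayer a l) := by
  funext q
  rcases q with ⟨k, j⟩ | ⟨k, j⟩
  · simp [Finset.sum_apply, atOddO, atEvenO, oddLayer, Fin.val_inj, Fin.is_le]
  · simp [Finset.sum_apply, atOddO, atEvenO, evenLayer, Fin.val_inj]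

theorem eq_sum_ladder_add_sum_atEvenO (a : OpenQ m ι ι' → ZMod 2) (W : ℕ → ι' → ZMod 2) :
    a = ∑ l ∈ Finset.Icc 1 (m + 1),
          (atOddO l (oddLayer a l) + ∑ k ∈ Finset.Ico 1 l, atEvenO k (W l))
      + ∑ k ∈ Finset.Icc 1 m, atEvenO k (evenLayer a k + ∑ l ∈ Finset.Ioc k (m + 1), W l) := by
  have hswap : ∑ l ∈ Finset.Icc 1 (m + 1), ∑ k ∈ Finset.Ico 1 l, atEvenO k (W l)
      = ∑ k ∈ Finset.Icc 1 m, ∑ l ∈ Finset.Ioc k (m + 1), atEvenO (m := m) (ι := ι) k (W l) :=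
    Finset.sum_comm' fun l k => by
      simp only [Finset.mem_Icc, Finset.mem_Ico, Finset.mem_Ioc]
      omega
  simp only [Finset.sum_add_distrib, atEvenO_add, atEvenO_sum, hswap]
  conv_lhs => rw [eq_sum_atOddO_add_sum_atEvenO a]
  rw [add_add_add_comm, ZModModule.add_self, add_zero]

variable [Fintype ι] [Fintype ι']

theorem dotp_atOddO (a : OpenQ m ι ι' → ZMod 2) (l : ℕ) (w : ι → ZMod 2) :
    dotp a (atOddO l w) = dotp (oddLayer a l) w := by
  simp only [dotp, oddLayer, Fintype.sum_sum_type, Fintype.sum_prod_type, atOddO, mul_ite,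
    mul_zero, Finset.sum_const_zero, add_zero, Finset.sum_mul, ite_mul, zero_mul]
  exact Finset.sum_comm

theorem dotp_atEvenO (a : OpenQ m ι ι' → ZMod 2) (l : ℕ) (w : ι' → ZMod 2) :
    dotp a (atEvenO l w) = dotp (evenLayer a l) w := by
  simp only [dotp, evenLayer, Fintype.sum_sum_type, Fintype.sum_prod_type, atEvenO, mul_ite,
    mul_zero, Finset.sum_const_zero, zero_add, Finset.sum_mul, ite_mul, zero_mul]
  exact Finset.sum_comm

end Layers

section DualPairs
variable {ι ι' A I : Type}

def dualPairs (x : I → ι → ZMod 2) (x' : I → ι' → ZMod 2) :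
    Submodule (ZMod 2) ((ι → ZMod 2) × (ι' → ZMod 2)) :=
  Submodule.span (ZMod 2) (Set.range fun i => (x i, x' i))

variable {x : I → ι → ZMod 2} {x' : I → ι' → ZMod 2}

theorem map_fst_dualPairs :
    (dualPairs x x').map (LinearMap.fst (ZMod 2) _ _) =
      Submodule.span (ZMod 2) (Set.range x) := by
  rw [dualPairs, Submodule.map_span, ← Set.range_comp]
  rfl

theorem map_snd_dualPairs :
    (dualPairs x x').map (LinearMap.snd (ZMod 2) _ _) =
      Submodule.span (ZMod 2) (Set.range x') := by
  rw [dualPairs, Submodule.map_span, ← Set.range_comp]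
  rfl

variable [Fintype ι] [Fintype ι'] in
theorem dotp_fst_eq_dotp_snd_of_mem_dualPairs {z : A → ι → ZMod 2} {z' : A → ι' → ZMod 2}
    (hdual : ∀ α i, dotp (z α) (x i) = dotp (z' α) (x' i))
    {p : (ι → ZMod 2) × (ι' → ZMod 2)} (hp : p ∈ dualPairs x x') (α : A) :
    dotp p.1 (z α) = dotp p.2 (z' α) := by
  induction hp using Submodule.span_induction with
  | mem p hp =>
    obtain ⟨i, rfl⟩ := hp
    simpa only [dotp_comm] using hdual α i
  | zero => simp [dotp_eq_dotProduct]
  | add p q _ _ hp hq => simp only [Prod.fst_add, Prod.snd_add, dotp_add_left, hp, hq]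
  | smul c p _ hp => simp only [Prod.smul_fst, Prod.smul_snd, dotp_smul_left, hp]

end DualPairs

section OpenBulk

variable {m l₀ : ℕ} {ι ι' A I : Type} [Fintype ι] [DecidableEq ι] [Fintype ι'] [DecidableEq ι']
  [Fintype A] [Fintype I] {z : A → ι → ZMod 2} {x : I → ι → ZMod 2}
  {z' : A → ι' → ZMod 2} {x' : I → ι' → ZMod 2}

local notation "𝒢" => openBulkSet m l₀ ι ι' A I z x z' x'
local notation "𝒳" => Submodule.span (ZMod 2) (Xop ⁻¹' 𝒢)

theorem mem_span_Xop_of_mem_dualPairs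
    (f : (ι → ZMod 2) × (ι' → ZMod 2) →ₗ[ZMod 2] (OpenQ m ι ι' → ZMod 2))
    (hf : ∀ i, Xop (f (x i, x' i)) ∈ 𝒢) {p : (ι → ZMod 2) × (ι' → ZMod 2)}
    (hp : p ∈ dualPairs x x') : f p ∈ 𝒳 := by
  refine Submodule.span_mono ?_ (Submodule.apply_mem_span_image_of_mem_span f hp)
  rintro _ ⟨_, ⟨i, rfl⟩, rfl⟩
  exact hf i

variable {p : (ι → ZMod 2) × (ι' → ZMod 2)}

theorem atOddO_mem_of_mem_dualPairs (hp : p ∈ dualPairs x x') :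
    atOddO 1 p.1 ∈ 𝒳 ∧ atOddO (m + 1) p.1 ∈ 𝒳 :=
  ⟨mem_span_Xop_of_mem_dualPairs (atOddOₗ 1 ∘ₗ LinearMap.fst _ _ _)
      (fun i => show Xop (atOddO 1 (x i)) ∈ 𝒢 from Or.inl ⟨i, Or.inl rfl⟩) hp,
    mem_span_Xop_of_mem_dualPairs (atOddOₗ (m + 1) ∘ₗ LinearMap.fst _ _ _)
      (fun i => show Xop (atOddO (m + 1) (x i)) ∈ 𝒢 from Or.inl ⟨i, Or.inr rfl⟩) hp⟩

theorem suspension_mem_of_mem_dualPairs (hp : p ∈ dualPairs x x') {l : ℕ} (hl₁ : 1 ≤ l)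
    (hl : l ≤ m) : atOddO l p.1 + atEvenO l p.2 + atOddO (l + 1) p.1 ∈ 𝒳 := by
  rw [← suspensionₗ_apply]
  refine mem_span_Xop_of_mem_dualPairs _ (fun i => ?_) hp
  rw [suspensionₗ_apply]
  exact Or.inr (Or.inl ⟨i, l, hl₁, hl, rfl⟩)

theorem ladder_mem_of_mem_dualPairs (hp : p ∈ dualPairs x x') {l : ℕ} (hl₁ : 1 ≤ l)
    (hl : l ≤ m + 1) : atOddO l p.1 + ∑ k ∈ Finset.Ico 1 l, atEvenO k p.2 ∈ 𝒳 := by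
  induction l, hl₁ using Nat.le_induction with
  | base => simpa using (atOddO_mem_of_mem_dualPairs hp).1
  | succ l hl₁ ih =>
    convert add_mem (ih (by omega)) (suspension_mem_of_mem_dualPairs hp hl₁ (by omega)) using 1
    rw [Finset.sum_Ico_succ_top hl₁]
    linear_combination -ZModModule.add_self (atOddO l p.1)

theorem sum_atEvenO_mem_of_mem_dualPairs (hp : p ∈ dualPairs x x') :
    ∑ k ∈ Finset.Icc 1 m, atEvenO k p.2 ∈ 𝒳 := by
  convert add_mem (ladder_mem_of_mem_dualPairs hp le_add_self le_rfl)
    (atOddO_mem_of_mem_dualPairs hp).2 using 1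
  rw [add_right_comm, ZModModule.add_self, zero_add, Finset.Ico_add_one_right_eq_Icc]

theorem sum_atEvenO_mem_of_dotp_eq (t : ℕ → ι' → ZMod 2)
    (ht : ∀ k ∈ Finset.Icc 1 m, ∀ α, dotp (t k) (z' α) = dotp (t l₀) (z' α))
    (ht₀ : t l₀ ∈ dotpPerp ↑(Submodule.span (ZMod 2) (Set.range z') ⊓ dotpPerp (Set.range x'))) :
    ∑ k ∈ Finset.Icc 1 m, atEvenO k (t k) ∈ 𝒳 := by
  obtain ⟨u, hu, w, hw, huw⟩ := Submodule.mem_sup.mp (dotpPerp_span_inf_dotpPerp_le _ _ ht₀)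
  rw [← map_snd_dualPairs (x := x)] at hw
  obtain ⟨p, hp, rfl⟩ := Submodule.mem_map.mp hw
  rw [LinearMap.snd_apply] at huw
  have hsplit (k : ℕ) :
      atEvenO (m := m) (ι := ι) k (t k) = atEvenO k (t k + p.2) + atEvenO k p.2 := by
    rw [← atEvenO_add, add_assoc, ZModModule.add_self, add_zero]
  rw [Finset.sum_congr rfl fun k _ => hsplit k, Finset.sum_add_distrib]
  refine add_mem (Submodule.sum_mem _ fun k hk => Submodule.subset_span ?_)
    (sum_atEvenO_mem_of_mem_dualPairs hp)
  obtain ⟨hk₁, hk⟩ := Finset.mem_Icc.mp hk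
  refine Or.inr (Or.inr (Or.inr (Or.inr (Or.inl ⟨k, t k + p.2, hk₁, hk, fun α => ?_, rfl⟩))))
  rw [dotp_add_left, ht k (Finset.mem_Icc.mpr ⟨hk₁, hk⟩), ← huw, dotp_add_left,
    mem_dotpPerp_range.mp hu α, zero_add, ZModModule.add_self]

variable {a : OpenQ m ι ι' → ZMod 2}

theorem oddLayer_mem_span_of_forall_Zop (ha : ∀ v, Zop v ∈ 𝒢 → dotp a v = 0) {l : ℕ}
    (hl₁ : 1 ≤ l) (hl : l ≤ m + 1) : oddLayer a l ∈ Submodule.span (ZMod 2) (Set.range x) := by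
  refine dotpPerp_dotpPerp_le _ fun v hv => ?_
  rw [← dotp_atOddO]
  exact ha _ (Or.inr (Or.inr (Or.inr (Or.inl ⟨l, v, hl₁, hl, mem_dotpPerp_range.mp hv, rfl⟩))))

theorem dotp_evenLayer_add_dotp_oddLayer_add_dotp_evenLayer_eq_zero
    (ha : ∀ v, Zop v ∈ 𝒢 → dotp a v = 0) {k : ℕ} (hk₁ : 1 ≤ k) (hk : k < m) (α : A) :
    dotp (evenLayer a k) (z' α) + dotp (oddLayer a (k + 1)) (z α)
      + dotp (evenLayer a (k + 1)) (z' α) = 0 := by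
  have h := ha _ (Or.inr (Or.inr (Or.inl ⟨α, k + 1, by omega, hk, rfl⟩)))
  rwa [Nat.add_sub_cancel, dotp_add_right, dotp_add_right, dotp_atEvenO, dotp_atOddO,
    dotp_atEvenO] at h

theorem evenLayer_mem_dotpPerp_of_forall_Zop (ha : ∀ v, Zop v ∈ 𝒢 → dotp a v = 0) :
    evenLayer a l₀ ∈
      dotpPerp ↑(Submodule.span (ZMod 2) (Set.range z') ⊓ dotpPerp (Set.range x')) :=
  fun v hv => by
    rw [← dotp_atEvenO]
    exact ha _ (Or.inr (Or.inr (Or.inr (Or.inr (Or.inr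
      ⟨v, hv.1, mem_dotpPerp_range.mp hv.2, rfl⟩)))))

theorem mem_span_Xop_of_forall_Zop (hdual : ∀ α i, dotp (z α) (x i) = dotp (z' α) (x' i))
    (hl₀ : 1 ≤ l₀ ∧ l₀ ≤ m) (ha : ∀ v, Zop v ∈ 𝒢 → dotp a v = 0) : a ∈ 𝒳 := by
  have hodd (l : ℕ) (hl : l ∈ Finset.Icc 1 (m + 1)) :
      ∃ w', (oddLayer a l, w') ∈ dualPairs x x' := by
    have h := oddLayer_mem_span_of_forall_Zop ha (Finset.mem_Icc.mp hl).1 (Finset.mem_Icc.mp hl).2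
    rw [← map_fst_dualPairs (x' := x')] at h
    obtain ⟨p, hp, hp₁⟩ := Submodule.mem_map.mp h
    exact ⟨p.2, hp₁ ▸ hp⟩
  choose! W hW using hodd
  rw [eq_sum_ladder_add_sum_atEvenO a W]
  refine add_mem (Submodule.sum_mem _ fun l hl => ladder_mem_of_mem_dualPairs (hW l hl)
    (Finset.mem_Icc.mp hl).1 (Finset.mem_Icc.mp hl).2) (sum_atEvenO_mem_of_dotp_eq _ ?_ ?_)
  · intro k hk α
    refine eq_of_forall_succ_eq_on_Icc
      (f := fun k => dotp (evenLayer a k + ∑ l ∈ Finset.Ioc k (m + 1), W l) (z' α))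
      (fun k hk₁ hk => ?_) k hk l₀ (Finset.mem_Icc.mpr hl₀)
    have hsusp := dotp_evenLayer_add_dotp_oddLayer_add_dotp_evenLayer_eq_zero ha hk₁ hk α
    have hpair := dotp_fst_eq_dotp_snd_of_mem_dualPairs hdual
      (hW (k + 1) (Finset.mem_Icc.mpr ⟨by omega, by omega⟩)) α
    rw [← Finset.Icc_add_one_left_eq_Ioc, ← Finset.Ioc_insert_left (by omega : k + 1 ≤ m + 1),
      Finset.sum_insert (by simp), dotp_add_left, dotp_add_left, dotp_add_left, ← hpair]
    linear_combination hsusp - CharTwo.add_self_eq_zero (dotp (evenLayer a (k + 1)) (z' α))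
  · intro v hv
    have hv' : v ∈ dotpPerp ↑(Submodule.span (ZMod 2) (Set.range x')) := by
      rw [dotpPerp_span]; exact hv.2
    rw [dotp_add_left, evenLayer_mem_dotpPerp_of_forall_Zop ha v hv, zero_add, dotp_sum_left]
    refine Finset.sum_eq_zero fun l hl => ?_
    have hl' : l ∈ Finset.Icc 1 (m + 1) := by
      simp only [Finset.mem_Ioc, Finset.mem_Icc] at hl ⊢
      omega
    rw [dotp_comm]
    exact hv' _ (map_snd_dualPairs (x := x) ▸ Submodule.mem_map_of_mem (hW l hl'))

theorem mem_span_Zop_of_forall_Xop (hdual : ∀ α i, dotp (z α) (x i) = dotp (z' α) (x' i))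
    (hl₀ : 1 ≤ l₀ ∧ l₀ ≤ m) {b : OpenQ m ι ι' → ZMod 2} (hb : ∀ u, Xop u ∈ 𝒢 → dotp b u = 0) :
    b ∈ Submodule.span (ZMod 2) (Zop ⁻¹' 𝒢) :=
  dotpPerp_le_span_comm (fun _ ha => mem_span_Xop_of_forall_Zop hdual hl₀ ha) hb

end OpenBulk

theorem statement14_general (m l₀ : ℕ) (hl₀ : 1 ≤ l₀ ∧ l₀ ≤ m) (ι ι' A I : Type)
    [Fintype ι] [DecidableEq ι] [Fintype ι'] [DecidableEq ι'] [Fintype A] [Fintype I]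
    (z : A → ι → ZMod 2) (x : I → ι → ZMod 2)
    (z' : A → ι' → ZMod 2) (x' : I → ι' → ZMod 2)
    (hdual : ∀ (α : A) (i : I), dotp (z α) (x i) = dotp (z' α) (x' i)) :
    ∀ a b : OpenQ m ι ι' → ZMod 2,
      (∀ M ∈ openBulkSet m l₀ ι ι' A I z x z' x',
        (Xop a * Zop b) * M = M * (Xop a * Zop b)) →
      ∃ ε : ℂ, (ε = 1 ∨ ε = -1) ∧
        ∃ L : List (Matrix (OpenQ m ι ι' → ZMod 2) (OpenQ m ι ι' → ZMod 2) ℂ),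
          (∀ M ∈ L, M ∈ openBulkSet m l₀ ι ι' A I z x z' x') ∧
          L.prod = ε • (Xop a * Zop b) := by
  intro a b hcomm
  set G := openBulkSet m l₀ ι ι' A I z x z' x'
  have ha : a ∈ Submodule.span (ZMod 2) (Xop ⁻¹' G) :=
    mem_span_Xop_of_forall_Zop hdual hl₀ fun v hv => dotp_eq_zero_of_commute_Zop (hcomm _ hv)
  have hb : b ∈ Submodule.span (ZMod 2) (Zop ⁻¹' G) :=
    mem_span_Zop_of_forall_Xop hdual hl₀ fun u hu => dotp_eq_zero_of_commute_Xop (hcomm _ hu)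
  have hXZ : Xop a * Zop b ∈ Submonoid.closure G := Submonoid.mul_mem _
    (Submonoid.closure_mono (Set.image_preimage_subset Xop G)
      (apply_mem_closure_image_of_mem_span Xop Xop_zero Xop_add ha))
    (Submonoid.closure_mono (Set.image_preimage_subset Zop G)
      (apply_mem_closure_image_of_mem_span Zop Zop_zero Zop_add hb))
  obtain ⟨L, hL, hprod⟩ := Submonoid.exists_list_of_mem_closure hXZ
  exact ⟨1, Or.inl rfl, L, hL, by rw [hprod, one_smul]⟩

/-- any Pauli operator `X_a Z_b` on the open bulk that commutes with every
operator in the open bulk generating set equals, up to a sign `ε = ±1`, a finite product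
of operators from that set. -/
theorem statement14 (m l₀ : ℕ) (hm : 1 ≤ m) (hl₀ : 1 ≤ l₀ ∧ l₀ ≤ m) (ι ι' A I : Type)
    [Fintype ι] [DecidableEq ι] [Fintype ι'] [DecidableEq ι'] [Fintype A] [Fintype I]
    (z : A → ι → ZMod 2) (x : I → ι → ZMod 2)
    (z' : A → ι' → ZMod 2) (x' : I → ι' → ZMod 2)
    (hdual : ∀ (α : A) (i : I), dotp (z α) (x i) = dotp (z' α) (x' i)) :
    ∀ a b : OpenQ m ι ι' → ZMod 2,
      (∀ M ∈ openBulkSet m l₀ ι ι' A I z x z' x',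
        (Xop a * Zop b) * M = M * (Xop a * Zop b)) →
      ∃ ε : ℂ, (ε = 1 ∨ ε = -1) ∧
        ∃ L : List (Matrix (OpenQ m ι ι' → ZMod 2) (OpenQ m ι ι' → ZMod 2) ℂ),
          (∀ M ∈ L, M ∈ openBulkSet m l₀ ι ι' A I z x z' x') ∧
          L.prod = ε • (Xop a * Zop b) :=
  statement14_general m l₀ hl₀ ι ι' A I z x z' x' hdual
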